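/- arXiv:1307.1670 — 5 statements merged into one kernel-verified Lean document; each statement's English description precedes it below -/
import Mathlib

section
/- Let x : ℝ → Fin N → Fin M → ℝ be differentiable and satisfy the graph replicator equation (d/dt) x(t) v s = F v s (x(t)) for all t, v, s. If for every vertex v the initial row sums to one, ∑_s x(0) v s = 1, then for every t ∈ ℝ and every vertex v one has ∑_s x(t) v s = ∑_s x(0) v s = 1. -/
open Finset Filter

/-- Expected payoff of pure strategy `s` at vertex `v` in state `x`. -/
noncomputable def pGraph {N M : ℕ} (a : Fin N → Fin N → ℝ)
    (B : Fin N → Matrix (Fin M) (Fin M) ℝ)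
    (v : Fin N) (s : Fin M) (x : Fin N → Fin M → ℝ) : ℝ :=
  ∑ r, B v s r * ((1 / ∑ w, a v w) * ∑ w, a v w * x w r)

/-- Average payoff at vertex `v` in state `x`. -/
noncomputable def phiGraph {N M : ℕ} (a : Fin N → Fin N → ℝ)
    (B : Fin N → Matrix (Fin M) (Fin M) ℝ)
    (v : Fin N) (x : Fin N → Fin M → ℝ) : ℝ :=
  ∑ s, x v s * pGraph a B v s x

/-- Graph replicator vector field. -/
noncomputable def FGraph {N M : ℕ} (a : Fin N → Fin N → ℝ)
    (B : Fin N → Matrix (Fin M) (Fin M) ℝ)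
    (v : Fin N) (s : Fin M) (x : Fin N → Fin M → ℝ) : ℝ :=
  x v s * (pGraph a B v s x - phiGraph a B v x)

/-! The row sum `S` at a vertex satisfies `S' = φ (1 - S)`, where `φ = ∑ₛ xₛ pₛ` is the average
payoff there. So the defect `S - 1` solves the scalar linear equation `y' = -φ y`, and an
integrating factor shows that it stays zero once it starts at zero. -/

theorem eq_exp_integral_mul_of_hasDerivAt {f g : ℝ → ℝ} (hg : Continuous g)
    (hf : ∀ t, HasDerivAt f (g t * f t) t) (a t : ℝ) :
    f t = Real.exp (∫ τ in a..t, g τ) * f a := by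
  set G : ℝ → ℝ := fun t => ∫ τ in a..t, g τ
  have hG : ∀ t, HasDerivAt G (g t) t := fun t =>
    intervalIntegral.integral_hasDerivAt_right (hg.intervalIntegrable _ _)
      (hg.stronglyMeasurableAtFilter _ _) hg.continuousAt
  have hconst : ∀ t, HasDerivAt (fun t => Real.exp (-G t) * f t) 0 t := fun t => by
    refine ((hG t).fun_neg.exp.fun_mul (hf t)).congr_deriv ?_
    ring
  have key := is_const_of_deriv_eq_zero (fun t => (hconst t).differentiableAt)
    (fun t => (hconst t).deriv) t a
  simp only [G, intervalIntegral.integral_same, neg_zero, Real.exp_zero, one_mul] at key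
  rw [← key, ← mul_assoc, ← Real.exp_add, add_neg_cancel, Real.exp_zero, one_mul]

section GraphReplicator

variable {N M : ℕ} (a : Fin N → Fin N → ℝ) (B : Fin N → Matrix (Fin M) (Fin M) ℝ) (v : Fin N)

theorem continuous_phiGraph : Continuous (phiGraph a B v) := by
  unfold phiGraph pGraph
  fun_prop

theorem sum_FGraph (x : Fin N → Fin M → ℝ) :
    ∑ s, FGraph a B v s x = phiGraph a B v x * (1 - ∑ s, x v s) := by
  simp only [FGraph, mul_sub, sum_sub_distrib, ← sum_mul, phiGraph]
  ring

theorem hasDerivAt_rowSum {x : ℝ → Fin N → Fin M → ℝ}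
    (hdiff : ∀ v s, Differentiable ℝ (fun t => x t v s))
    (hode : ∀ t v s, deriv (fun τ => x τ v s) t = FGraph a B v s (x t)) (t : ℝ) :
    HasDerivAt (fun t => ∑ s, x t v s) (phiGraph a B v (x t) * (1 - ∑ s, x t v s)) t := by
  rw [← sum_FGraph]
  exact HasDerivAt.fun_sum fun s _ => hode t v s ▸ (hdiff v s t).hasDerivAt

end GraphReplicator

theorem rowSum_invariant_general
    (N M : ℕ)
    (a : Fin N → Fin N → ℝ)
    (B : Fin N → Matrix (Fin M) (Fin M) ℝ)
    (x : ℝ → Fin N → Fin M → ℝ)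
    (hdiff : ∀ v s, Differentiable ℝ (fun t => x t v s))
    (hode : ∀ t v s, deriv (fun τ => x τ v s) t = FGraph a B v s (x t))
    (hinit : ∀ v, ∑ s, x 0 v s = 1) :
    ∀ (t : ℝ) (v : Fin N),
      (∑ s, x t v s = ∑ s, x 0 v s) ∧ (∑ s, x t v s = 1) := by
  have hx : Continuous x := continuous_pi fun v => continuous_pi fun s => (hdiff v s).continuous
  have row_eq_one : ∀ t v, ∑ s, x t v s = 1 := fun t v => by
    have hdefect : ∀ t, HasDerivAt (fun t => ∑ s, x t v s - 1)
        (-phiGraph a B v (x t) * (∑ s, x t v s - 1)) t := fun t => by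
      refine ((hasDerivAt_rowSum a B v hdiff hode t).sub_const 1).congr_deriv ?_
      ring
    have := eq_exp_integral_mul_of_hasDerivAt
      (((continuous_phiGraph a B v).comp hx).neg) hdefect 0 t
    simpa [hinit v, sub_eq_zero] using this
  exact fun t v => ⟨by rw [row_eq_one, row_eq_one], row_eq_one t v⟩

theorem rowSum_invariant
    (N M : ℕ) (hN : 1 ≤ N) (hM : 1 ≤ M)
    (a : Fin N → Fin N → ℝ)
    (ha : ∀ v w, 0 ≤ a v w) (haa : ∀ v, a v v = 0)
    (hd : ∀ v, 0 < ∑ w, a v w)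
    (B : Fin N → Matrix (Fin M) (Fin M) ℝ)
    (x : ℝ → Fin N → Fin M → ℝ)
    (hdiff : ∀ v s, Differentiable ℝ (fun t => x t v s))
    (hode : ∀ t v s, deriv (fun τ => x τ v s) t = FGraph a B v s (x t))
    (hinit : ∀ v, ∑ s, x 0 v s = 1) :
    ∀ (t : ℝ) (v : Fin N),
      (∑ s, x t v s = ∑ s, x 0 v s) ∧ (∑ s, x t v s = 1) :=
  rowSum_invariant_general N M a B x hdiff hode hinit
end

section
/- Lift of classical replicator solutions: suppose all payoff matrices coincide, B v = B for every vertex v. If y : ℝ → Fin M → ℝ is differentiable and solves the classical replicator equation (d/dt) y(t) s = y(t) s * ((∑_r B s r * y(t) r) − ∑_{s'} ∑_r y(t) s' * B s' r * y(t) r) for all t, s, then the homogeneous lift x(t) v := y(t) is a solution of the graph replicator equation: (d/dt) x(t) v s = F v s (x(t)) for all t, v, s. -/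
open Finset Filter

section HomogeneousState

variable {N M : ℕ} {a : Fin N → Fin N → ℝ} (B : Fin N → Matrix (Fin M) (Fin M) ℝ)
  {v : Fin N} (z : Fin M → ℝ)

theorem pGraph_const (hv : ∑ w, a v w ≠ 0) (s : Fin M) :
    pGraph a B v s (fun _ => z) = ∑ r, B v s r * z r := by
  refine sum_congr rfl fun r _ => ?_
  rw [← sum_mul, one_div, inv_mul_cancel_left₀ hv]

theorem phiGraph_const (hv : ∑ w, a v w ≠ 0) :
    phiGraph a B v (fun _ => z) = ∑ s, ∑ r, z s * B v s r * z r := by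
  refine sum_congr rfl fun s _ => ?_
  rw [pGraph_const B z hv, mul_sum]
  simp only [mul_assoc]

theorem FGraph_const (hv : ∑ w, a v w ≠ 0) (s : Fin M) :
    FGraph a B v s (fun _ => z) =
      z s * ((∑ r, B v s r * z r) - ∑ s', ∑ r, z s' * B v s' r * z r) := by
  rw [FGraph, pGraph_const B z hv, phiGraph_const B z hv]

end HomogeneousState

theorem classical_solution_lifts_general
    (N M : ℕ)
    (a : Fin N → Fin N → ℝ)
    (hd : ∀ v, 0 < ∑ w, a v w)
    (B : Fin N → Matrix (Fin M) (Fin M) ℝ)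
    (B₀ : Matrix (Fin M) (Fin M) ℝ)
    (hB : ∀ v, B v = B₀)
    (y : ℝ → Fin M → ℝ)
    (hode : ∀ t s, deriv (fun τ => y τ s) t =
      y t s * ((∑ r, B₀ s r * y t r) -
        ∑ s', ∑ r, y t s' * B₀ s' r * y t r)) :
    ∀ (t : ℝ) (v : Fin N) (s : Fin M),
      deriv (fun τ => (fun w : Fin N => y τ) v s) t =
        FGraph a B v s (fun _ : Fin N => y t) := by
  intro t v s
  rw [FGraph_const B (y t) (hd v).ne', hB]
  exact hode t s

theorem classical_solution_lifts
    (N M : ℕ) (hN : 1 ≤ N) (hM : 1 ≤ M)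
    (a : Fin N → Fin N → ℝ)
    (ha : ∀ v w, 0 ≤ a v w) (haa : ∀ v, a v v = 0)
    (hd : ∀ v, 0 < ∑ w, a v w)
    (B : Fin N → Matrix (Fin M) (Fin M) ℝ)
    (B₀ : Matrix (Fin M) (Fin M) ℝ)
    (hB : ∀ v, B v = B₀)
    (y : ℝ → Fin M → ℝ)
    (hdiff : ∀ s, Differentiable ℝ (fun t => y t s))
    (hode : ∀ t s, deriv (fun τ => y τ s) t =
      y t s * ((∑ r, B₀ s r * y t r) -
        ∑ s', ∑ r, y t s' * B₀ s' r * y t r)) :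
    ∀ (t : ℝ) (v : Fin N) (s : Fin M),
      deriv (fun τ => (fun w : Fin N => y τ) v s) t =
        FGraph a B v s (fun _ : Fin N => y t) :=
  classical_solution_lifts_general N M a hd B B₀ hB y hode
end

section
/- Bistable dynamics: for the payoff matrix B = !![1, 0; 0, θ] with θ > 0, let y : ℝ → Fin 2 → ℝ be differentiable, solve the classical replicator equation ẏ_s = y_s((B y)_s − yᵀ B y) for t ≥ 0, and satisfy y(0) ∈ Δ_2 with 0 < y(0) 0 < 1. Then: (i) if y(0) 0 > θ/(1+θ), then y(t) 0 → 1 as t → ∞; (ii) if y(0) 0 < θ/(1+θ), then y(t) 0 → 0 as t → ∞; (iii) if y(0) 0 = θ/(1+θ), then y(t) 0 = θ/(1+θ) for all t ≥ 0. (On Δ_2 the first component satisfies ẏ_0 = y_0 (1 − y_0)((1+θ) y_0 − θ).) -/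
/-!
On the simplex the replicator flow conserves `y 0 + y 1 = 1`, so `x = y 0` solves
`x' = x (1 - x) ((1 + θ) x - θ)`. Each of `x`, `x - 1` and `(1 + θ) x - θ` then solves a linear
equation `u' = c(t) u`, whence `u t = u 0 * exp (∫₀ᵗ c)` keeps its sign: `x` stays in `(0, 1)`,
on the side of `θ / (1 + θ)` where it starts, and is monotone. Above the threshold, `x - 1`
solves `u' = c u` with `c ≤ -x 0 ((1 + θ) x 0 - θ) < 0` and so decays exponentially; below it,
`x` itself does, at rate `(1 - x 0) (θ - (1 + θ) x 0)`.
-/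

open Finset Filter

/-- Bilinear payoff form `zᵀ B w`. -/
def quadForm (B : Matrix (Fin 2) (Fin 2) ℝ) (z w : Fin 2 → ℝ) : ℝ :=
  ∑ s, ∑ r, z s * B s r * w r

/-- Membership in the 2-simplex. -/
def inSimplex2 (z : Fin 2 → ℝ) : Prop :=
  0 ≤ z 0 ∧ 0 ≤ z 1 ∧ z 0 + z 1 = 1

open Matrix Topology

theorem quadForm_eq_dotProduct_mulVec (B : Matrix (Fin 2) (Fin 2) ℝ) (z w : Fin 2 → ℝ) :
    quadForm B z w = z ⬝ᵥ (B *ᵥ w) := by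
  simp only [quadForm, dotProduct, mulVec, Finset.mul_sum, mul_assoc]

section LinearODE

variable {h c : ℝ → ℝ}

theorem eq_mul_exp_integral_of_deriv_eq_mul (hh : Differentiable ℝ h) (hc : Continuous c)
    (hode : ∀ t, 0 ≤ t → deriv h t = c t * h t) {t : ℝ} (ht : 0 ≤ t) :
    h t = h 0 * Real.exp (∫ s in (0 : ℝ)..t, c s) := by
  set C : ℝ → ℝ := fun u => ∫ s in (0 : ℝ)..u, c s
  have hC : ∀ u, HasDerivAt C (c u) u := fun u => (hc.integral_hasStrictDerivAt 0 u).hasDerivAt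
  -- `h · exp (-C)` has zero derivative on `[0, ∞)`
  have hconst : ∀ u ∈ Set.Icc 0 t, h u * Real.exp (-C u) = h 0 * Real.exp (-C 0) := by
    refine constant_of_has_deriv_right_zero (Continuous.continuousOn ?_) fun u hu => ?_
    · exact hh.continuous.mul (Real.continuous_exp.comp
        (continuous_iff_continuousAt.2 fun u => (hC u).continuousAt).neg)
    · have hd : HasDerivAt (fun u => h u * Real.exp (-C u))
          (deriv h u * Real.exp (-C u) + h u * (Real.exp (-C u) * -c u)) u :=
        (hh u).hasDerivAt.mul (hC u).neg.exp
      convert hd.hasDerivWithinAt using 1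
      rw [hode u hu.1]
      ring
  have hC0 : C 0 = 0 := intervalIntegral.integral_same
  have := hconst t ⟨ht, le_rfl⟩
  rw [hC0, neg_zero, Real.exp_zero, mul_one] at this
  rw [← this, mul_assoc, ← Real.exp_add, neg_add_cancel, Real.exp_zero, mul_one]

theorem sign_eq_of_deriv_eq_mul (hh : Differentiable ℝ h) (hc : Continuous c)
    (hode : ∀ t, 0 ≤ t → deriv h t = c t * h t) {t : ℝ} (ht : 0 ≤ t) :
    SignType.sign (h t) = SignType.sign (h 0) := by
  rw [eq_mul_exp_integral_of_deriv_eq_mul hh hc hode ht, sign_mul, sign_pos (Real.exp_pos _),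
    mul_one]

theorem tendsto_zero_of_deriv_eq_mul_of_le_neg (hh : Differentiable ℝ h) (hc : Continuous c)
    (hode : ∀ t, 0 ≤ t → deriv h t = c t * h t) {κ : ℝ} (hκ : 0 < κ)
    (hcκ : ∀ t, 0 ≤ t → c t ≤ -κ) : Tendsto h atTop (𝓝 0) := by
  have hdecay : Tendsto (fun t => |h 0| * Real.exp (-κ * t)) atTop (𝓝 0) := by
    simpa using (Real.tendsto_exp_atBot.comp
      (tendsto_id.const_mul_atTop_of_neg (neg_neg_of_pos hκ))).const_mul |h 0|
  refine squeeze_zero_norm' ?_ hdecay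
  filter_upwards [eventually_ge_atTop 0] with t ht
  have hint : ∫ s in (0 : ℝ)..t, c s ≤ -κ * t :=
    calc ∫ s in (0 : ℝ)..t, c s ≤ ∫ _ in (0 : ℝ)..t, -κ :=
          intervalIntegral.integral_mono_on ht (hc.intervalIntegrable _ _)
            intervalIntegrable_const fun s hs => hcκ s hs.1
      _ = -κ * t := by simp [mul_comm]
  rw [Real.norm_eq_abs, eq_mul_exp_integral_of_deriv_eq_mul hh hc hode ht, abs_mul, Real.abs_exp]
  gcongr

end LinearODE

theorem sum_eq_one_of_replicator {ι : Type*} [Fintype ι] (B : Matrix ι ι ℝ) {y : ℝ → ι → ℝ}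
    (hdiff : ∀ s, Differentiable ℝ (fun t => y t s))
    (hode : ∀ t, 0 ≤ t → ∀ s,
      deriv (fun τ => y τ s) t = y t s * ((B *ᵥ y t) s - y t ⬝ᵥ (B *ᵥ y t)))
    (hsum : ∑ s, y 0 s = 1) {t : ℝ} (ht : 0 ≤ t) : ∑ s, y t s = 1 := by
  have hy : Continuous y := continuous_pi fun s => (hdiff s).continuous
  -- the defect `1 - ∑ y` solves `u' = -(yᵀ B y) u`
  have hdefect := eq_mul_exp_integral_of_deriv_eq_mul (h := fun t => 1 - ∑ s, y t s)
    (c := fun t => -(y t ⬝ᵥ (B *ᵥ y t))) (by fun_prop) (by fun_prop) (fun u hu => by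
      rw [deriv_const_sub, deriv_fun_sum fun s _ => hdiff s u]
      simp only [hode u hu, mul_sub, Finset.sum_sub_distrib, ← Finset.sum_mul, dotProduct]
      ring) ht
  simp only [hsum, sub_self, zero_mul] at hdefect
  linarith

def IsBistableSolution (θ : ℝ) (x : ℝ → ℝ) : Prop :=
  Differentiable ℝ x ∧ ∀ t, 0 ≤ t → deriv x t = x t * (1 - x t) * ((1 + θ) * x t - θ)

namespace IsBistableSolution

variable {θ : ℝ} {x : ℝ → ℝ} {t : ℝ}

theorem sign_self_eq (hx : IsBistableSolution θ x) (ht : 0 ≤ t) :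
    SignType.sign (x t) = SignType.sign (x 0) :=
  have := hx.1.continuous
  sign_eq_of_deriv_eq_mul (c := fun t => (1 - x t) * ((1 + θ) * x t - θ)) hx.1 (by fun_prop)
    (fun u hu => by rw [hx.2 u hu]; ring) ht

theorem sign_sub_one_eq (hx : IsBistableSolution θ x) (ht : 0 ≤ t) :
    SignType.sign (x t - 1) = SignType.sign (x 0 - 1) :=
  have := hx.1.continuous
  sign_eq_of_deriv_eq_mul (c := fun t => -(x t * ((1 + θ) * x t - θ))) (hx.1.sub_const 1)
    (by fun_prop) (fun u hu => by rw [deriv_sub_const, hx.2 u hu]; ring) ht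

theorem sign_threshold_eq (hx : IsBistableSolution θ x) (ht : 0 ≤ t) :
    SignType.sign ((1 + θ) * x t - θ) = SignType.sign ((1 + θ) * x 0 - θ) :=
  have := hx.1.continuous
  sign_eq_of_deriv_eq_mul (c := fun t => (1 + θ) * (x t * (1 - x t)))
    ((hx.1.const_mul _).sub_const θ) (by fun_prop)
    (fun u hu => by rw [deriv_sub_const, deriv_const_mul _ (hx.1 u), hx.2 u hu]; ring) ht

theorem mem_Ioo (hx : IsBistableSolution θ x) (h0 : 0 < x 0) (h1 : x 0 < 1) (ht : 0 ≤ t) :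
    x t ∈ Set.Ioo 0 1 := by
  have hpos := hx.sign_self_eq ht
  have hlt := hx.sign_sub_one_eq ht
  rw [sign_pos h0, sign_eq_one_iff] at hpos
  rw [sign_neg (sub_neg.2 h1), sign_eq_neg_one_iff, sub_neg] at hlt
  exact ⟨hpos, hlt⟩

theorem monotoneOn (hx : IsBistableSolution θ x) (h0 : 0 < x 0) (h1 : x 0 < 1)
    (hup : θ < (1 + θ) * x 0) : MonotoneOn x (Set.Ici 0) := by
  refine monotoneOn_of_deriv_nonneg (convex_Ici 0) hx.1.continuous.continuousOn
    hx.1.differentiableOn fun u hu => ?_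
  rw [interior_Ici] at hu
  obtain ⟨hpos, hlt⟩ := hx.mem_Ioo h0 h1 hu.le
  have hw := hx.sign_threshold_eq hu.le
  rw [sign_pos (sub_pos.2 hup), sign_eq_one_iff, sub_pos] at hw
  rw [hx.2 u hu.le]
  exact mul_nonneg (mul_nonneg hpos.le (sub_nonneg.2 hlt.le)) (sub_nonneg.2 hw.le)

theorem antitoneOn (hx : IsBistableSolution θ x) (h0 : 0 < x 0) (h1 : x 0 < 1)
    (hdown : (1 + θ) * x 0 < θ) : AntitoneOn x (Set.Ici 0) := by
  refine antitoneOn_of_deriv_nonpos (convex_Ici 0) hx.1.continuous.continuousOn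
    hx.1.differentiableOn fun u hu => ?_
  rw [interior_Ici] at hu
  obtain ⟨hpos, hlt⟩ := hx.mem_Ioo h0 h1 hu.le
  have hw := hx.sign_threshold_eq hu.le
  rw [sign_neg (sub_neg.2 hdown), sign_eq_neg_one_iff, sub_neg] at hw
  rw [hx.2 u hu.le]
  exact mul_nonpos_of_nonneg_of_nonpos (mul_nonneg hpos.le (sub_nonneg.2 hlt.le))
    (sub_nonpos.2 hw.le)

theorem tendsto_one (hx : IsBistableSolution θ x) (hθ : 0 ≤ 1 + θ) (h0 : 0 < x 0)
    (h1 : x 0 < 1) (hup : θ < (1 + θ) * x 0) : Tendsto x atTop (𝓝 1) := by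
  have := hx.1.continuous
  refine tendsto_sub_nhds_zero_iff.1 <| tendsto_zero_of_deriv_eq_mul_of_le_neg
    (c := fun t => -(x t * ((1 + θ) * x t - θ))) (hx.1.sub_const 1) (by fun_prop)
    (fun u hu => by rw [deriv_sub_const, hx.2 u hu]; ring)
    (mul_pos h0 (sub_pos.2 hup)) fun u hu => neg_le_neg ?_
  -- `x` increases, so `x ≥ x 0` and `(1 + θ) x - θ ≥ (1 + θ) x 0 - θ > 0`
  have hmono := hx.monotoneOn h0 h1 hup Set.self_mem_Ici hu hu
  exact mul_le_mul hmono (sub_le_sub_right (mul_le_mul_of_nonneg_left hmono hθ) θ)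
    (sub_pos.2 hup).le (h0.trans_le hmono).le

theorem tendsto_zero (hx : IsBistableSolution θ x) (hθ : 0 ≤ 1 + θ) (h0 : 0 < x 0)
    (h1 : x 0 < 1) (hdown : (1 + θ) * x 0 < θ) : Tendsto x atTop (𝓝 0) := by
  have := hx.1.continuous
  refine tendsto_zero_of_deriv_eq_mul_of_le_neg
    (c := fun t => (1 - x t) * ((1 + θ) * x t - θ)) hx.1 (by fun_prop)
    (fun u hu => by rw [hx.2 u hu]; ring)
    (mul_pos (sub_pos.2 h1) (sub_pos.2 hdown)) fun u hu => ?_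
  have hanti := hx.antitoneOn h0 h1 hdown Set.self_mem_Ici hu hu
  have hw := hx.sign_threshold_eq hu
  rw [sign_neg (sub_neg.2 hdown), sign_eq_neg_one_iff] at hw
  calc (1 - x u) * ((1 + θ) * x u - θ) ≤ (1 - x 0) * ((1 + θ) * x u - θ) :=
        mul_le_mul_of_nonpos_right (sub_le_sub_left hanti 1) hw.le
    _ ≤ (1 - x 0) * ((1 + θ) * x 0 - θ) := mul_le_mul_of_nonneg_left
        (sub_le_sub_right (mul_le_mul_of_nonneg_left hanti hθ) θ) (sub_pos.2 h1).le
    _ = -((1 - x 0) * (θ - (1 + θ) * x 0)) := by ring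

theorem eq_of_eq_threshold (hx : IsBistableSolution θ x) (hθ : 1 + θ ≠ 0)
    (heq : x 0 = θ / (1 + θ)) (ht : 0 ≤ t) : x t = θ / (1 + θ) := by
  rw [eq_div_iff hθ, mul_comm, ← sub_eq_zero] at heq ⊢
  simpa only [heq, sign_zero, sign_eq_zero_iff] using hx.sign_threshold_eq ht

end IsBistableSolution

theorem isBistableSolution_of_replicator {θ : ℝ} {y : ℝ → Fin 2 → ℝ}
    (hdiff : ∀ s, Differentiable ℝ (fun t => y t s))
    (hode : ∀ t, 0 ≤ t → ∀ s, deriv (fun τ => y τ s) t =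
      y t s * ((!![1, 0; 0, θ] *ᵥ y t) s - y t ⬝ᵥ (!![1, 0; 0, θ] *ᵥ y t)))
    (hsum : y 0 0 + y 0 1 = 1) : IsBistableSolution θ (fun t => y t 0) := by
  refine ⟨hdiff 0, fun t ht => ?_⟩
  have hsum_t := sum_eq_one_of_replicator _ hdiff hode (by simpa using hsum) ht
  rw [Fin.sum_univ_two] at hsum_t
  have hB0 : (!![1, 0; 0, θ] *ᵥ y t) 0 = y t 0 := by simp [mulVec, dotProduct]
  have hB1 : (!![1, 0; 0, θ] *ᵥ y t) 1 = θ * y t 1 := by simp [mulVec, dotProduct]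
  rw [hode t ht 0, vec2_dotProduct, hB0, hB1, show y t 1 = 1 - y t 0 by linarith]
  ring

theorem bistable_dynamics (θ : ℝ) (hθ : 0 < θ)
    (y : ℝ → Fin 2 → ℝ)
    (hdiff : ∀ s, Differentiable ℝ (fun t => y t s))
    (hode : ∀ t : ℝ, 0 ≤ t → ∀ s : Fin 2,
      deriv (fun τ => y τ s) t =
        y t s * ((∑ r, (!![1, 0; 0, θ] : Matrix (Fin 2) (Fin 2) ℝ) s r * y t r) -
          ∑ s', ∑ r, y t s' * (!![1, 0; 0, θ] : Matrix (Fin 2) (Fin 2) ℝ) s' r * y t r))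
    (hinit : inSimplex2 (y 0))
    (h0 : 0 < y 0 0) (h1 : y 0 0 < 1) :
    (y 0 0 > θ / (1 + θ) →
      Tendsto (fun t => y t 0) atTop (nhds 1)) ∧
    (y 0 0 < θ / (1 + θ) →
      Tendsto (fun t => y t 0) atTop (nhds 0)) ∧
    (y 0 0 = θ / (1 + θ) →
      ∀ t : ℝ, 0 ≤ t → y t 0 = θ / (1 + θ)) := by
  have hθ₁ : 0 < 1 + θ := by linarith
  have hx : IsBistableSolution θ (fun t => y t 0) :=
    isBistableSolution_of_replicator hdiff
      (fun t ht s => by rw [hode t ht s, ← quadForm_eq_dotProduct_mulVec]; rfl) hinit.2.2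
  exact ⟨fun hup => hx.tendsto_one hθ₁.le h0 h1 ((div_lt_iff₀' hθ₁).1 hup),
    fun hdown => hx.tendsto_zero hθ₁.le h0 h1 ((lt_div_iff₀' hθ₁).1 hdown),
    fun heq _ ht => hx.eq_of_eq_threshold hθ₁.ne' heq ht⟩
end

section
/- Defection takes over in the classical prisoners' dilemma replicator dynamics: for B = !![1, 0; θ, 0] with θ > 1, let y : ℝ → Fin 2 → ℝ be differentiable, solve the classical replicator equation ẏ_s = y_s((B y)_s − yᵀ B y) for t ≥ 0, and satisfy y(0) ∈ Δ_2 with 0 < y(0) 0 < 1. Then y(t) 0 → 0 as t → ∞ (the frequency of cooperators vanishes; on Δ_2 the first component satisfies ẏ_0 = (1 − θ) y_0² (1 − y_0) < 0 in the interior). -/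
/-!
On the simplex the cooperator share `u = y · 0` obeys `u' = (1 - θ) u² (1 - u)`. The simplex and
its interior are invariant because `y · 0 + y · 1 - 1`, `u` and `1 - u` each solve a linear
equation `f' = g f`, whence `f t = f 0 · exp ∫₀ᵗ g`; for `1 - u` the exponent is nonnegative, so
`1 - u ≥ 1 - u 0`. Then `(1 / u)' = (θ - 1)(1 - u) ≥ (θ - 1)(1 - u 0) > 0`: `1 / u` grows at least
linearly and `u → 0`.
-/

open Finset Filter

open Real

theorem eq_mul_exp_integral_of_hasDerivAt_mul {f g : ℝ → ℝ} {a t : ℝ} (hg : Continuous g)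
    (hf : ∀ x, a ≤ x → HasDerivAt f (g x * f x) x) (ht : a ≤ t) :
    f t = f a * exp (∫ s in a..t, g s) := by
  set G : ℝ → ℝ := fun x => ∫ s in a..x, g s
  have hG : ∀ x, HasDerivAt G (g x) x := fun x => (hg.integral_hasStrictDerivAt a x).hasDerivAt
  have hφ : ∀ x, a ≤ x → HasDerivAt (fun x => f x * exp (-G x)) 0 x := fun x hx =>
    ((hf x hx).fun_mul (hG x).fun_neg.exp).congr_deriv (by ring)
  have hconst := constant_of_has_deriv_right_zero
    (fun x hx => (hφ x hx.1).continuousAt.continuousWithinAt)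
    (fun x hx => (hφ x hx.1).hasDerivWithinAt) t ⟨ht, le_rfl⟩
  simp only [G, intervalIntegral.integral_same, neg_zero, exp_zero, mul_one] at hconst
  rw [← hconst, mul_assoc, ← exp_add, neg_add_cancel, exp_zero, mul_one]

theorem tendsto_zero_of_hasDerivAt_le_neg_mul_sq {f f' : ℝ → ℝ} {a c : ℝ} (hc : 0 < c)
    (hpos : ∀ t, a ≤ t → 0 < f t) (hf : ∀ t, a ≤ t → HasDerivAt f (f' t) t)
    (hf' : ∀ t, a ≤ t → f' t ≤ -c * f t ^ 2) :
    Tendsto f atTop (nhds 0) := by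
  have hinv : ∀ t, a ≤ t → HasDerivAt f⁻¹ (-f' t / f t ^ 2) t := fun t ht =>
    (hf t ht).inv (hpos t ht).ne'
  have hlin : ∀ t, a ≤ t → c * (t - a) ≤ (f t)⁻¹ - (f a)⁻¹ := by
    intro t ht
    refine (convex_Ici a).mul_sub_le_image_sub_of_le_deriv
      (fun x hx => (hinv x hx).continuousAt.continuousWithinAt)
      (fun x hx => (hinv x (interior_subset hx)).differentiableAt.differentiableWithinAt)
      (fun x hx => ?_) a Set.self_mem_Ici t ht ht
    rw [interior_Ici] at hx
    rw [(hinv x hx.le).deriv, le_div_iff₀ (pow_pos (hpos x hx.le) 2)]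
    linarith [hf' x hx.le]
  have hinv_top : Tendsto (fun t => (f t)⁻¹) atTop atTop := by
    refine tendsto_atTop_mono' (f₁ := fun t => c * (t - a) + (f a)⁻¹) atTop ?_
      (tendsto_atTop_add_const_right _ _
        ((tendsto_atTop_add_const_right _ _ tendsto_id).const_mul_atTop hc))
    filter_upwards [eventually_ge_atTop a] with t ht
    linarith [hlin t ht]
  simpa only [Pi.inv_def, inv_inv] using hinv_top.inv_tendsto_atTop

theorem prisonersDilemma_payoff (θ : ℝ) (z : Fin 2 → ℝ) (s : Fin 2) :
    ∑ r, (!![1, 0; θ, 0] : Matrix (Fin 2) (Fin 2) ℝ) s r * z r = ![z 0, θ * z 0] s := by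
  fin_cases s <;> simp

theorem prisonersDilemma_meanPayoff (θ : ℝ) (z : Fin 2 → ℝ) :
    ∑ s, ∑ r, z s * (!![1, 0; θ, 0] : Matrix (Fin 2) (Fin 2) ℝ) s r * z r =
      z 0 * (z 0 + θ * z 1) := by
  simp only [Fin.sum_univ_two, Matrix.of_apply, Matrix.cons_val', Matrix.cons_val_fin_one,
    Matrix.cons_val_zero, Matrix.cons_val_one]
  ring

theorem prisoners_dilemma_defection_takes_over (θ : ℝ) (hθ : 1 < θ)
    (y : ℝ → Fin 2 → ℝ)
    (hdiff : ∀ s, Differentiable ℝ (fun t => y t s))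
    (hode : ∀ t : ℝ, 0 ≤ t → ∀ s : Fin 2,
      deriv (fun τ => y τ s) t =
        y t s * ((∑ r, (!![1, 0; θ, 0] : Matrix (Fin 2) (Fin 2) ℝ) s r * y t r) -
          ∑ s', ∑ r, y t s' * (!![1, 0; θ, 0] : Matrix (Fin 2) (Fin 2) ℝ) s' r * y t r))
    (hinit : inSimplex2 (y 0))
    (h0 : 0 < y 0 0) (h1 : y 0 0 < 1) :
    Tendsto (fun t => y t 0) atTop (nhds 0) := by
  have hθ1 : 0 < θ - 1 := sub_pos.2 hθ
  set u := fun t => y t 0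
  set v := fun t => y t 1
  have hu_cont : Continuous u := (hdiff 0).continuous
  have hv_cont : Continuous v := (hdiff 1).continuous
  have hy : ∀ t, 0 ≤ t → ∀ s, HasDerivAt (fun τ => y τ s)
      (y t s * (![u t, θ * u t] s - u t * (u t + θ * v t))) t := fun t ht s => by
    simpa only [hode t ht s, prisonersDilemma_payoff, prisonersDilemma_meanPayoff]
      using (hdiff s t).hasDerivAt
  have hsum : ∀ t, 0 ≤ t → u t + v t = 1 := fun t ht => by
    have h := eq_mul_exp_integral_of_hasDerivAt_mul (f := fun t => u t + v t - 1)
      (g := fun t => -(u t * (u t + θ * v t))) (by fun_prop)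
      (fun x hx => (((hy x hx 0).add (hy x hx 1)).sub_const 1).congr_deriv (by
        simp only [Matrix.cons_val_zero, Matrix.cons_val_one, Matrix.cons_val_fin_one]
        ring)) ht
    have hsum0 : u 0 + v 0 = 1 := hinit.2.2
    rw [hsum0, sub_self, zero_mul] at h
    linarith
  have hu : ∀ t, 0 ≤ t → HasDerivAt u ((1 - θ) * u t * (1 - u t) * u t) t := fun t ht =>
    (hy t ht 0).congr_deriv (by
      have hv : v t = 1 - u t := by linarith [hsum t ht]
      rw [Matrix.cons_val_zero, hv]; ring)
  have hu_pos : ∀ t, 0 ≤ t → 0 < u t := fun t ht => by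
    rw [eq_mul_exp_integral_of_hasDerivAt_mul (by fun_prop) hu ht]
    exact mul_pos h0 (exp_pos _)
  have hu_le : ∀ t, 0 ≤ t → 1 - u 0 ≤ 1 - u t := fun t ht => by
    rw [eq_mul_exp_integral_of_hasDerivAt_mul (f := fun t => 1 - u t)
      (g := fun t => (θ - 1) * u t ^ 2) (by fun_prop)
      (fun x hx => ((hu x hx).const_sub 1).congr_deriv (by ring)) ht]
    exact le_mul_of_one_le_right (by linarith)
      (one_le_exp (intervalIntegral.integral_nonneg ht fun s _ => by positivity))
  refine tendsto_zero_of_hasDerivAt_le_neg_mul_sq (mul_pos hθ1 (sub_pos.2 h1)) hu_pos hu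
    fun t ht => ?_
  linarith [mul_le_mul_of_nonneg_left (hu_le t ht) (by positivity : 0 ≤ (θ - 1) * u t ^ 2)]
end

section
/- Coexistence dynamics: for the payoff matrix B = !![0, 1; 1, 0], let y : ℝ → Fin 2 → ℝ be differentiable, solve the classical replicator equation ẏ_s = y_s((B y)_s − yᵀ B y) for t ≥ 0, and satisfy y(0) ∈ Δ_2 with 0 < y(0) 0 < 1. Then y(t) 0 → 1/2 as t → ∞: every interior solution converges to the mixed equilibrium x* = (1/2, 1/2). (On Δ_2 the first component satisfies ẏ_0 = y_0 (1 − y_0)(1 − 2 y_0).) -/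
/-!
The simplex is invariant: `s = y₀ + y₁ - 1` solves the linear equation `ṡ = -(yᵀ B y) s`
with `s(0) = 0`, so Gronwall's inequality gives `s ≡ 0`. On the simplex, for `B = !![0, 1; 1, 0]`,
the first component solves `u̇ = u (1 - u) (1 - 2u)`. This equation is integrated exactly:
with `k = (u₀ - 1/2)² / (u₀ (1 - u₀))`, the defect `D = (u - 1/2)² (eᵗ + k) - k/4` solves
`Ḋ = 4 (u - 1/2)² D` with `D(0) = 0`, so again `D ≡ 0`. Thus
`(u - 1/2)² = k / (4 (eᵗ + k)) → 0`.
-/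

open Finset Filter

open Set Matrix

theorem eq_zero_of_hasDerivAt_eq_smul {E : Type*} [NormedAddCommGroup E] [NormedSpace ℝ E]
    {f : ℝ → E} {c : ℝ → ℝ} {a T : ℝ} (hc : ContinuousOn c (Ici a))
    (hf : ∀ t, a ≤ t → HasDerivAt f (c t • f t) t) (ha : f a = 0) (hT : a ≤ T) : f T = 0 := by
  obtain ⟨K, hK⟩ := isCompact_Icc.exists_bound_of_continuousOn (hc.mono Icc_subset_Ici_self)
  have hbound := norm_le_gronwallBound_of_norm_deriv_right_le (δ := 0) (K := K) (ε := 0)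
    (fun t ht => (hf t ht.1).continuousAt.continuousWithinAt)
    (fun t ht => (hf t ht.1).hasDerivWithinAt) (by simp [ha])
    (fun t ht => by
      rw [norm_smul, add_zero]
      exact mul_le_mul_of_nonneg_right (hK t (Ico_subset_Icc_self ht)) (norm_nonneg _))
    T ⟨hT, le_rfl⟩
  rwa [gronwallBound_ε0_δ0, norm_le_zero_iff] at hbound

def replicatorField (B : Matrix (Fin 2) (Fin 2) ℝ) (z : Fin 2 → ℝ) (s : Fin 2) : ℝ :=
  z s * ((B *ᵥ z) s - quadForm B z z)

theorem replicatorField_zero_add_one (B : Matrix (Fin 2) (Fin 2) ℝ) (z : Fin 2 → ℝ) :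
    replicatorField B z 0 + replicatorField B z 1 = -quadForm B z z * (z 0 + z 1 - 1) := by
  simp only [replicatorField, quadForm, mulVec, dotProduct, Fin.sum_univ_two]
  ring

theorem replicatorField_swap_zero {z : Fin 2 → ℝ} (hz : z 0 + z 1 = 1) :
    replicatorField !![0, 1; 1, 0] z 0 = z 0 * (1 - z 0) * (1 - 2 * z 0) := by
  have h₁ : z 1 = 1 - z 0 := by linarith
  simp only [replicatorField, quadForm, mulVec, dotProduct, Fin.sum_univ_two, of_apply, cons_val',
    cons_val_zero, cons_val_one, cons_val_fin_one, h₁]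
  ring

theorem add_eq_one_of_replicator {B : Matrix (Fin 2) (Fin 2) ℝ} {y : ℝ → Fin 2 → ℝ}
    (hdiff : ∀ s, Differentiable ℝ (fun t => y t s))
    (hode : ∀ t, 0 ≤ t → ∀ s, deriv (fun τ => y τ s) t = replicatorField B (y t) s)
    (hinit : y 0 0 + y 0 1 = 1) {T : ℝ} (hT : 0 ≤ T) : y T 0 + y T 1 = 1 := by
  have hcont : Continuous fun t => quadForm B (y t) (y t) := by
    have := (hdiff 0).continuous
    have := (hdiff 1).continuous
    simp only [quadForm, Fin.sum_univ_two]
    fun_prop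
  have hderiv (t : ℝ) (ht : 0 ≤ t) : HasDerivAt (fun t => y t 0 + y t 1 - 1)
      (-quadForm B (y t) (y t) * (y t 0 + y t 1 - 1)) t := by
    have h := ((hdiff 0 t).hasDerivAt.add (hdiff 1 t).hasDerivAt).sub_const 1
    rwa [hode t ht, hode t ht, replicatorField_zero_add_one] at h
  have := eq_zero_of_hasDerivAt_eq_smul hcont.neg.continuousOn hderiv (by linarith) hT
  linarith

theorem sq_sub_half_mul_exp_add_of_logistic {u : ℝ → ℝ}
    (hu : ∀ t, 0 ≤ t → HasDerivAt u (u t * (1 - u t) * (1 - 2 * u t)) t)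
    {k : ℝ} (hk : (u 0 - 1 / 2) ^ 2 * (1 + k) = k / 4) {T : ℝ} (hT : 0 ≤ T) :
    (u T - 1 / 2) ^ 2 * (Real.exp T + k) = k / 4 := by
  have hc : ContinuousOn (fun t => 4 * (u t - 1 / 2) ^ 2) (Ici 0) := fun t ht => by
    have := (hu t ht).continuousAt
    exact ContinuousAt.continuousWithinAt (by fun_prop)
  have hderiv (t : ℝ) (ht : 0 ≤ t) :
      HasDerivAt (fun t => (u t - 1 / 2) ^ 2 * (Real.exp t + k) - k / 4)
        (4 * (u t - 1 / 2) ^ 2 * ((u t - 1 / 2) ^ 2 * (Real.exp t + k) - k / 4)) t := by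
    have h := ((((hu t ht).sub_const (1 / 2)).fun_pow 2).mul
      ((Real.hasDerivAt_exp t).add_const k)).sub_const (k / 4)
    exact h.congr_deriv (by push_cast; ring)
  have := eq_zero_of_hasDerivAt_eq_smul hc hderiv (by rw [Real.exp_zero]; linarith) hT
  linarith

theorem tendsto_half_of_logistic {u : ℝ → ℝ}
    (hu : ∀ t, 0 ≤ t → HasDerivAt u (u t * (1 - u t) * (1 - 2 * u t)) t)
    (h₀ : 0 < u 0) (h₁ : u 0 < 1) : Tendsto u atTop (nhds (1 / 2)) := by
  set k := (u 0 - 1 / 2) ^ 2 / (u 0 * (1 - u 0))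
  have hk : (u 0 - 1 / 2) ^ 2 * (1 + k) = k / 4 := by
    have : 1 - u 0 ≠ 0 := by linarith
    simp only [k]
    field_simp
    ring
  have hk₀ : 0 ≤ k := div_nonneg (sq_nonneg _) (by nlinarith)
  have hclosed : (fun t => (u t - 1 / 2) ^ 2) =ᶠ[atTop] fun t => k / 4 / (Real.exp t + k) := by
    filter_upwards [eventually_ge_atTop 0] with t ht
    rw [eq_div_iff (by positivity)]
    exact sq_sub_half_mul_exp_add_of_logistic hu hk ht
  have hsq : Tendsto (fun t => (u t - 1 / 2) ^ 2) atTop (nhds 0) :=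
    (tendsto_const_nhds.div_atTop
      (tendsto_atTop_add_const_right _ k Real.tendsto_exp_atTop)).congr' hclosed.symm
  rw [← tendsto_sub_nhds_zero_iff, tendsto_zero_iff_abs_tendsto_zero]
  simpa [Function.comp_def, Real.sqrt_sq_eq_abs] using hsq.sqrt

theorem coexistence_dynamics
    (y : ℝ → Fin 2 → ℝ)
    (hdiff : ∀ s, Differentiable ℝ (fun t => y t s))
    (hode : ∀ t : ℝ, 0 ≤ t → ∀ s : Fin 2,
      deriv (fun τ => y τ s) t =
        y t s * ((∑ r, (!![0, 1; 1, 0] : Matrix (Fin 2) (Fin 2) ℝ) s r * y t r) -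
          ∑ s', ∑ r, y t s' * (!![0, 1; 1, 0] : Matrix (Fin 2) (Fin 2) ℝ) s' r * y t r))
    (hinit : inSimplex2 (y 0))
    (h0 : 0 < y 0 0) (h1 : y 0 0 < 1) :
    Tendsto (fun t => y t 0) atTop (nhds (1/2)) := by
  have hrep : ∀ t, 0 ≤ t → ∀ s,
      deriv (fun τ => y τ s) t = replicatorField !![0, 1; 1, 0] (y t) s := hode
  refine tendsto_half_of_logistic (fun t ht => ?_) h0 h1
  rw [← replicatorField_swap_zero (add_eq_one_of_replicator hdiff hrep hinit.2.2 ht),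
    ← hrep t ht 0]
  exact (hdiff 0 t).hasDerivAt
end
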